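/- There exists a smooth family of smooth functions f_z: [0,∞) → ℝ, z ∈ ℝ, and a constant c > 2, such that: (i) f_z(1) = 0 for all z; (ii) t·f_z'(t) ≤ 1 for all z and t, with equality only when z = 0 and t = 1; (iii) there is T₀ > 0 with f_z(t) > log c for all t ≥ T₀ and all z. -/
import Mathlib


open Real

lemma arctan_pos_aux {y : ℝ} (hy : 0 < y) : 0 < arctan y := by
  have := Real.arctan_strictMono hy
  rwa [arctan_zero] at this

lemma arctan_lt_self_aux {y : ℝ} (hy : 0 < y) : arctan y < y := by
  have h1 : 0 < arctan y := arctan_pos_aux hy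
  have h2 : arctan y < π / 2 := arctan_lt_pi_div_two y
  have := Real.lt_tan h1 h2
  rwa [tan_arctan] at this

lemma family_hasDerivAt (z t : ℝ) :
    HasDerivAt (fun t => 2 * arctan t - π / 2 +
      (z ^ 2 / (1 + z ^ 2)) * ((π / 4 - arctan t) / 4))
      (2 * (1 / (1 + t ^ 2)) +
        (z ^ 2 / (1 + z ^ 2)) * ((0 - 1 / (1 + t ^ 2)) / 4)) t :=
  (((Real.hasDerivAt_arctan t).const_mul 2).sub_const (π / 2)).add
    ((((hasDerivAt_const t (π / 4)).sub (Real.hasDerivAt_arctan t)).div_const 4).const_mul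
      (z ^ 2 / (1 + z ^ 2)))

/-- There exists a smooth family of functions f_z : [0,∞) → ℝ, z ∈ ℝ, and a
constant c > 2, such that (i) f_z(1) = 0 for all z; (ii) t·f_z'(t) ≤ 1 for all z
and t ≥ 0, with equality only when z = 0 and t = 1; (iii) f_z(t) > log c for all
sufficiently large t, uniformly in z. -/
theorem exists_sublogarithmic_family :
    ∃ (f : ℝ → ℝ → ℝ) (c T₀ : ℝ),
      ContDiff ℝ (⊤ : ℕ∞) (fun q : ℝ × ℝ => f q.1 q.2) ∧
      (∀ z : ℝ, f z 1 = 0) ∧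
      (∀ z t : ℝ, 0 ≤ t → t * deriv (f z) t ≤ 1) ∧
      (∀ z t : ℝ, 0 ≤ t → t * deriv (f z) t = 1 → z = 0 ∧ t = 1) ∧
      2 < c ∧ 0 < T₀ ∧
      (∀ z t : ℝ, T₀ ≤ t → log c < f z t) := by
  have hz : ∀ z : ℝ, (0 : ℝ) < 1 + z ^ 2 := fun z => by positivity
  refine ⟨fun z t => 2 * arctan t - π / 2 + (z ^ 2 / (1 + z ^ 2)) * ((π / 4 - arctan t) / 4),
    Real.exp 1, 6, ?_, ?_, ?_, ?_, ?_, by norm_num, ?_⟩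
  · -- smoothness
    have h1 : ContDiff ℝ (⊤ : ℕ∞) (fun q : ℝ × ℝ => arctan q.2) :=
      Real.contDiff_arctan.comp contDiff_snd
    have h2 : ContDiff ℝ (⊤ : ℕ∞) (fun q : ℝ × ℝ => q.1 ^ 2 / (1 + q.1 ^ 2)) :=
      (contDiff_fst.pow 2).div (contDiff_const.add (contDiff_fst.pow 2))
        (fun q => (hz q.1).ne')
    exact ((contDiff_const.mul h1).sub contDiff_const).add
      (h2.mul ((contDiff_const.sub h1).div_const 4))
  · intro z
    simp [arctan_one]
    ring
  · -- derivative bound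
    intro z t ht
    rw [(family_hasDerivAt z t).deriv]
    have h1 := hz z
    have h2 : (0 : ℝ) < 1 + t ^ 2 := by positivity
    have hb : z ^ 2 / (1 + z ^ 2) < 1 := (div_lt_one h1).2 (by nlinarith)
    have hb0 : 0 ≤ z ^ 2 / (1 + z ^ 2) := by positivity
    have htd : t * (1 / (1 + t ^ 2)) ≤ 1 / 2 := by
      rw [mul_one_div, div_le_div_iff₀ h2 two_pos]
      nlinarith [sq_nonneg (t - 1)]
    have htd0 : 0 ≤ t * (1 / (1 + t ^ 2)) := by positivity
    nlinarith
  · -- equality case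
    intro z t ht heq
    rw [(family_hasDerivAt z t).deriv] at heq
    have h1 := hz z
    have h2 : (0 : ℝ) < 1 + t ^ 2 := by positivity
    have heq' : t * (8 * (1 + z ^ 2) - z ^ 2) = 4 * (1 + t ^ 2) * (1 + z ^ 2) := by
      field_simp at heq
      nlinarith [heq]
    have ht1 : t = 1 := by nlinarith [sq_nonneg (t - 1), sq_nonneg z, sq_nonneg (z * (t - 1))]
    subst ht1
    refine ⟨by nlinarith, rfl⟩
  · have := Real.exp_one_gt_d9
    linarith
  · -- lower bound for large t
    intro z t ht
    rw [Real.log_exp]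
    have h1 := hz z
    have hb : z ^ 2 / (1 + z ^ 2) < 1 := (div_lt_one h1).2 (by nlinarith)
    have hb0 : 0 ≤ z ^ 2 / (1 + z ^ 2) := by positivity
    have hA6 : arctan 6 ≤ arctan t := Real.arctan_strictMono.monotone ht
    have hA : π / 2 - 1 / 6 < arctan t := by
      have : arctan (6:ℝ)⁻¹ < 6⁻¹ := arctan_lt_self_aux (by norm_num)
      have h6 : arctan (6:ℝ)⁻¹ = π / 2 - arctan 6 := arctan_inv_of_pos (by norm_num)
      rw [h6] at this
      norm_num at this ⊢
      linarith
    have hAhi : arctan t < π / 2 := arctan_lt_pi_div_two t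
    have hneg : π / 4 - arctan t < 0 := by
      have : π / 4 < arctan t := by
        have hpi := Real.pi_gt_three
        linarith
      linarith
    have hkey : (π / 4 - arctan t) / 4 ≤ z ^ 2 / (1 + z ^ 2) * ((π / 4 - arctan t) / 4) := by
      have hx : (π / 4 - arctan t) / 4 < 0 := by linarith
      nlinarith
    have hpi := Real.pi_gt_three
    nlinarith
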